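/- arXiv:2001.05347 — 2 statements merged into one kernel-verified Lean document; each statement's English description precedes it below -/
import Mathlib

section
/- Let theta = q*d/dq on Q[[q]], let I = \sum_{k>=0} ((3k)!/(k!)^3)(-1)^k q^k (a unit in Q[[q]] since I(0)=1), and let X = (1+27q)^{-1}. Define S := theta(I)/I - (X-1)/3 in Q[[q]]. Then S satisfies the Riccati equation theta(S) = -S^2 + ((X-1)/3)*S - X*(X-1)/9. -/
/-!
The Euler operator `θ` is the derivation `q • d/dq`, so the logarithmic derivative `L = θI/I`
satisfies `θL = θ²I/I - L²`. Multiplying the Picard–Fuchs equation by `X = (1 + 27q)⁻¹` gives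
`θ²I/I = (X - 1)L + 2(X - 1)/9`, and `θX = X(X - 1)`. With `S = L - (X - 1)/3` the Riccati
equation becomes a polynomial identity in `L` and `X`.
-/

/-- The Euler derivation `θ = q d/dq` on `ℚ[[q]]`, acting on coefficients by
`(θ f)_k = k * f_k`. -/
noncomputable def theta (f : PowerSeries ℚ) : PowerSeries ℚ :=
  PowerSeries.mk fun k => (k : ℚ) * PowerSeries.coeff k f

/-- The power series `I(q) = ∑_{k ≥ 0} ((3k)!/(k!)^3) (-1)^k q^k` (a unit since `I(0)=1`). -/
noncomputable def Iseries : PowerSeries ℚ :=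
  PowerSeries.mk fun k =>
    ((Nat.factorial (3 * k) : ℚ) / (Nat.factorial k : ℚ) ^ 3) * (-1) ^ k

/-- The power series `X(q) = ∑_{k ≥ 0} (-27)^k q^k = (1+27q)^{-1}`. -/
noncomputable def Xseries : PowerSeries ℚ :=
  PowerSeries.mk fun k => (-27 : ℚ) ^ k

/-- `S := θ(I)/I - (X-1)/3`. -/
noncomputable def Sseries : PowerSeries ℚ :=
  theta Iseries * Iseries⁻¹ - (1 / 3 : ℚ) • (Xseries - 1)

open PowerSeries

namespace PowerSeries

variable {R : Type*} [CommSemiring R]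

variable (R) in
noncomputable def eulerDerivation : Derivation R R⟦X⟧ R⟦X⟧ := (X : R⟦X⟧) • d⁄dX R

theorem coeff_eulerDerivation (f : R⟦X⟧) (n : ℕ) :
    coeff n (eulerDerivation R f) = n * coeff n f := by
  cases n with
  | zero => simp [eulerDerivation]
  | succ n => simp [eulerDerivation, coeff_succ_X_mul, coeff_derivative, mul_comm]

@[simp]
theorem eulerDerivation_X : eulerDerivation R X = X := by
  simp [eulerDerivation]

end PowerSeries

theorem Derivation.map_logDeriv_of_mul_eq_one {R A : Type*} [CommRing R] [CommRing A]
    [Algebra R A] (D : Derivation R A A) {a b : A} (h : a * b = 1) :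
    D (D a * b) = D (D a) * b - (D a * b) ^ 2 := by
  rw [D.leibniz, D.leibniz_of_mul_eq_one (by rwa [mul_comm] : b * a = 1), smul_eq_mul,
    smul_eq_mul]
  ring

theorem theta_eq_eulerDerivation (f : ℚ⟦X⟧) : theta f = eulerDerivation ℚ f := by
  ext n
  simp [theta, coeff_eulerDerivation]

theorem Xseries_mul_one_add : Xseries * (1 + 27 * X) = 1 := by
  ext n
  cases n with
  | zero => simp [Xseries]
  | succ n =>
    simp only [Xseries, ← map_ofNat C, mul_add, mul_one, mul_left_comm _ (C _), map_add, coeff_mk,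
      coeff_C_mul, coeff_succ_mul_X, coeff_one, Nat.add_eq_zero_iff, one_ne_zero, and_false,
      ↓reduceIte]
    ring

theorem theta_Xseries : theta Xseries = Xseries * (Xseries - 1) := by
  have h27 : eulerDerivation ℚ (27 : ℚ⟦X⟧) = 0 := by
    exact_mod_cast (eulerDerivation ℚ).map_natCast 27
  rw [theta_eq_eulerDerivation, Derivation.leibniz_of_mul_eq_one _ Xseries_mul_one_add]
  simp only [map_add, Derivation.map_one_eq_zero, Derivation.leibniz, eulerDerivation_X,
    smul_eq_mul, h27, mul_zero, add_zero, zero_add, neg_mul]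
  linear_combination (-Xseries) * Xseries_mul_one_add

theorem coeff_Iseries_succ (n : ℕ) :
    ((n : ℚ) + 1) ^ 2 * coeff (n + 1) Iseries =
      -3 * (3 * n + 1) * (3 * n + 2) * coeff n Iseries := by
  have h3f : ((3 * (n + 1)).factorial : ℚ) =
      (3 * n + 3) * (3 * n + 2) * (3 * n + 1) * (3 * n).factorial := by
    rw [show 3 * (n + 1) = 3 * n + 2 + 1 by ring, Nat.factorial_succ, Nat.factorial_succ,
      Nat.factorial_succ]
    push_cast
    ring
  simp only [Iseries, coeff_mk, h3f, Nat.factorial_succ]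
  push_cast
  field_simp
  ring

/-- The Picard–Fuchs equation `θ²I + 3q(3θ+1)(3θ+2)I = 0`. -/
theorem Iseries_picardFuchs :
    theta (theta Iseries) +
      X * (27 * theta (theta Iseries) + 27 * theta Iseries + 6 * Iseries) = 0 := by
  ext n
  cases n with
  | zero => simp [theta]
  | succ n =>
    simp only [theta, coeff_mk, ← map_ofNat C, map_add, Nat.cast_add, Nat.cast_one,
      coeff_succ_X_mul, coeff_C_mul, map_zero]
    linear_combination coeff_Iseries_succ n

theorem Iseries_mul_inv : Iseries * Iseries⁻¹ = 1 :=
  PowerSeries.mul_inv_cancel _ (by simp [Iseries])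

theorem theta_theta_Iseries_mul_inv :
    theta (theta Iseries) * Iseries⁻¹ =
      (Xseries - 1) * (theta Iseries * Iseries⁻¹) + (2 / 9 : ℚ) • (Xseries - 1) := by
  linear_combination (norm := algebra)
    Xseries * Iseries⁻¹ * Iseries_picardFuchs
      - (theta (theta Iseries) + theta Iseries + (2 / 9 : ℚ) • Iseries) * Iseries⁻¹ *
        Xseries_mul_one_add
      + (2 / 9 : ℚ) • (Xseries - 1) * Iseries_mul_inv

/-- The Riccati equation `θ(S) = -S² + ((X-1)/3) S - X(X-1)/9`. -/
theorem stmt4 :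
    theta Sseries =
      -Sseries ^ 2 + ((1 / 3 : ℚ) • (Xseries - 1)) * Sseries -
        (1 / 9 : ℚ) • (Xseries * (Xseries - 1)) := by
  have hθS : theta Sseries =
      theta (theta Iseries) * Iseries⁻¹ - (theta Iseries * Iseries⁻¹) ^ 2 -
        (1 / 3 : ℚ) • theta Xseries := by
    simp only [Sseries, theta_eq_eulerDerivation, map_sub, Derivation.map_smul,
      Derivation.map_one_eq_zero, sub_zero,
      (eulerDerivation ℚ).map_logDeriv_of_mul_eq_one Iseries_mul_inv]
  rw [hθS, theta_theta_Iseries_mul_inv, theta_Xseries, Sseries]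
  algebra
end

section
/- Let g >= 2 and let j, k be non-negative integers with j + k <= 3g-3 and 3*(j - (g-1)) + k >= 0. Then in the field Q(A,B,C) of rational functions in three indeterminates, after the substitution X = A^3/C and S = (A*B - A^3)/(6*C), the element X^{j-(g-1)} * S^k can be written as C^{-(2g-2)} * P(A,B,C) for some polynomial P in Q[A,B,C] that is homogeneous of weight 6g-6 with respect to the grading wt(A)=1, wt(B)=2, wt(C)=3. -/
open MvPolynomial

/-- The field `ℚ(A,B,C)` of rational functions in three indeterminates
(`A = X 0`, `B = X 1`, `C = X 2`). -/
noncomputable abbrev QABC := FractionRing (MvPolynomial (Fin 3) ℚ)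

/-- The canonical embedding `ℚ[A,B,C] → ℚ(A,B,C)`. -/
noncomputable abbrev ι : MvPolynomial (Fin 3) ℚ →+* QABC :=
  algebraMap (MvPolynomial (Fin 3) ℚ) QABC

lemma whs_sub {σ : Type*} {w : σ → ℕ} {φ ψ : MvPolynomial σ ℚ} {n : ℕ}
    (hφ : φ.IsWeightedHomogeneous w n) (hψ : ψ.IsWeightedHomogeneous w n) :
    (φ - ψ).IsWeightedHomogeneous w n := by
  intro d hd
  rw [coeff_sub] at hd
  by_cases h : coeff d φ = 0
  · exact hψ (by intro h'; apply hd; simp [h, h'])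
  · exact hφ h

lemma whs_pow {σ : Type*} {w : σ → ℕ} {φ : MvPolynomial σ ℚ} {n : ℕ}
    (hφ : φ.IsWeightedHomogeneous w n) (k : ℕ) :
    (φ ^ k).IsWeightedHomogeneous w (k * n) := by
  induction k with
  | zero => simpa using isWeightedHomogeneous_one ℚ w
  | succ m ih =>
    have := ih.mul hφ
    rw [← pow_succ] at this
    convert this using 1
    ring

/-- Let `g ≥ 2` and `j, k ≥ 0` with `j + k ≤ 3g-3` and `3(j-(g-1)) + k ≥ 0`.  In `ℚ(A,B,C)`,
after substituting `X = A³/C` and `S = (AB-A³)/(6C)`, the element `X^{j-(g-1)} S^k` can be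
written as `C^{-(2g-2)} P(A,B,C)` for a polynomial `P ∈ ℚ[A,B,C]` which is homogeneous of
weight `6g-6` for the grading `wt(A)=1`, `wt(B)=2`, `wt(C)=3`. -/
theorem stmt6 (g j k : ℕ) (hg : 2 ≤ g) (hjk : j + k ≤ 3 * g - 3)
    (hreg : 0 ≤ 3 * ((j : ℤ) - ((g : ℤ) - 1)) + (k : ℤ)) :
    ∃ P : MvPolynomial (Fin 3) ℚ,
      P.IsWeightedHomogeneous ![1, 2, 3] (6 * g - 6) ∧
      (ι (X 0) ^ 3 / ι (X 2)) ^ ((j : ℤ) - ((g : ℤ) - 1)) *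
          ((ι (X 0) * ι (X 1) - ι (X 0) ^ 3) / (6 * ι (X 2))) ^ k =
        ι (X 2) ^ (-(2 * (g : ℤ) - 2)) * ι P := by
  set a : ℤ := (j : ℤ) - ((g : ℤ) - 1) with ha
  set p : ℕ := (3 * a + k).toNat with hpdef
  have hp : (p : ℤ) = 3 * a + k := Int.toNat_of_nonneg (by omega)
  set q : ℕ := 3 * g - 3 - j - k with hqdef
  have hq : (q : ℤ) = 3 * (g : ℤ) - 3 - j - k := by
    have : 3 ≤ 3 * g := by omega
    omega
  refine ⟨MvPolynomial.C ((6 : ℚ)⁻¹ ^ k) * X 0 ^ p * (X 1 - X 0 ^ 2) ^ k * X 2 ^ q, ?_, ?_⟩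
  · -- homogeneity
    have h0 : (X 0 : MvPolynomial (Fin 3) ℚ).IsWeightedHomogeneous ![1,2,3] 1 := by
      simpa using isWeightedHomogeneous_X ℚ ![1,2,3] 0
    have h1 : (X 1 : MvPolynomial (Fin 3) ℚ).IsWeightedHomogeneous ![1,2,3] 2 := by
      simpa using isWeightedHomogeneous_X ℚ ![1,2,3] 1
    have h2 : (X 2 : MvPolynomial (Fin 3) ℚ).IsWeightedHomogeneous ![1,2,3] 3 := by
      simpa using isWeightedHomogeneous_X ℚ ![1,2,3] 2
    have hc : (MvPolynomial.C ((6:ℚ)⁻¹ ^ k) :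
        MvPolynomial (Fin 3) ℚ).IsWeightedHomogeneous ![1,2,3] 0 :=
      isWeightedHomogeneous_C _ _
    have hB : ((X 1 - X 0 ^ 2 : MvPolynomial (Fin 3) ℚ)).IsWeightedHomogeneous ![1,2,3] 2 :=
      whs_sub h1 (by simpa using whs_pow h0 2)
    have H := ((hc.mul (whs_pow h0 p)).mul (whs_pow hB k)).mul (whs_pow h2 q)
    convert H using 1
    omega
  · -- the identity in the fraction field
    have hinj : Function.Injective ι := IsFractionRing.injective (MvPolynomial (Fin 3) ℚ) QABC
    have hA : ι (X 0) ≠ 0 := fun h => X_ne_zero (R := ℚ) 0 (hinj (by simp at h))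
    have hC : ι (X 2) ≠ 0 := fun h => X_ne_zero (R := ℚ) 2 (hinj (by simp at h))
    have h6 : (6 : QABC) ≠ 0 := by norm_num
    have hc6 : ι (MvPolynomial.C ((6:ℚ)⁻¹)) = (6 : QABC)⁻¹ := by
      rw [← MvPolynomial.algebraMap_eq, ← IsScalarTower.algebraMap_apply, map_inv₀, map_ofNat]
    have e1 : (ι (X 0) ^ 3 / ι (X 2)) ^ a = ι (X 0) ^ (3 * a) * ι (X 2) ^ (-a) := by
      rw [div_zpow, ← zpow_natCast (ι (X 0)) 3, ← zpow_mul, div_eq_mul_inv, zpow_neg]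
      norm_num
    have e2 : ((ι (X 0) * ι (X 1) - ι (X 0) ^ 3) / (6 * ι (X 2))) ^ k
        = (6 : QABC)⁻¹ ^ k * (ι (X 0) ^ k * ((ι (X 1) - ι (X 0) ^ 2) ^ k * (ι (X 2))⁻¹ ^ k)) := by
      have h : ι (X 0) * ι (X 1) - ι (X 0) ^ 3 = ι (X 0) * (ι (X 1) - ι (X 0) ^ 2) := by ring
      rw [h, div_pow, mul_pow, mul_pow, div_eq_mul_inv, mul_inv, inv_pow, inv_pow]
      ring
    have hApow : ι (X 0) ^ (3 * a) * ι (X 0) ^ (k : ℕ) = ι (X 0) ^ (p : ℕ) := by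
      rw [← zpow_natCast (ι (X 0)) k, ← zpow_natCast (ι (X 0)) p, ← zpow_add₀ hA]
      congr 1
      omega
    have hCpow : ι (X 2) ^ (-a) * ((ι (X 2))⁻¹) ^ (k : ℕ)
        = ι (X 2) ^ (-(2 * (g : ℤ) - 2)) * ι (X 2) ^ (q : ℕ) := by
      rw [inv_pow, ← zpow_natCast (ι (X 2)) k, ← zpow_neg, ← zpow_natCast (ι (X 2)) q,
        ← zpow_add₀ hC, ← zpow_add₀ hC]
      congr 1
      omega
    rw [e1, e2]
    simp only [map_mul, map_pow, map_sub, hc6]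
    calc ι (X 0) ^ (3 * a) * ι (X 2) ^ (-a) *
          ((6:QABC)⁻¹ ^ k * (ι (X 0) ^ k * ((ι (X 1) - ι (X 0) ^ 2) ^ k * (ι (X 2))⁻¹ ^ k)))
        = (ι (X 0) ^ (3 * a) * ι (X 0) ^ k) * (ι (X 2) ^ (-a) * (ι (X 2))⁻¹ ^ k) *
            ((6:QABC)⁻¹ ^ k * (ι (X 1) - ι (X 0) ^ 2) ^ k) := by ring
      _ = ι (X 0) ^ p * (ι (X 2) ^ (-(2 * (g:ℤ) - 2)) * ι (X 2) ^ q) *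
            ((6:QABC)⁻¹ ^ k * (ι (X 1) - ι (X 0) ^ 2) ^ k) := by rw [hApow, hCpow]
      _ = ι (X 2) ^ (-(2 * (g:ℤ) - 2)) *
            ((6:QABC)⁻¹ ^ k * ι (X 0) ^ p * (ι (X 1) - ι (X 0) ^ 2) ^ k * ι (X 2) ^ q) := by ring
end
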